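/- arXiv:2104.13801 — 3 statements merged into one kernel-verified Lean document; each statement's English description precedes it below -/
import Mathlib

section
/- For every l ∈ ℝ and s > 0, the differential entropy of the Cauchy density equals log(4πs); that is, −∫_ℝ p_{l,s}(x)·log p_{l,s}(x) dx = log(4·π·s). -/
open MeasureTheory Real

/-- The Cauchy density with location `l` and scale `s`. -/
noncomputable def cauchyPdf (l s x : ℝ) : ℝ := s / (π * (s ^ 2 + (x - l) ^ 2))

/-!
Substituting `x = l + s tan θ` turns the Cauchy density into `cos² θ / (π s)` and `dx` into
`s dθ / cos² θ`, so the entropy integral becomes `-(1/π) ∫_{-π/2}^{π/2} (2 log cos θ - log (π s)) dθ`.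
Since `∫_{-π/2}^{π/2} log cos = ∫_0^π log sin = -π log 2`, this equals `2 log 2 + log (π s)`.
-/

open Set

theorem integral_log_cos_neg_pi_div_two_pi_div_two :
    ∫ x in -(π / 2)..π / 2, log (cos x) = -log 2 * π := by
  simp_rw [← sin_add_pi_div_two]
  rw [intervalIntegral.integral_comp_add_right (fun x ↦ log (sin x)), neg_add_cancel,
    add_halves, integral_log_sin_zero_pi]

theorem integral_eq_setIntegral_Ioo_affine_tan {E : Type*} [NormedAddCommGroup E]
    [NormedSpace ℝ E] (l : ℝ) {s : ℝ} (hs : s ≠ 0) (f : ℝ → E) :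
    ∫ x, f x = ∫ θ in Ioo (-(π / 2)) (π / 2), (|s| / cos θ ^ 2) • f (l + s * tan θ) := by
  have hderiv : ∀ θ ∈ Ioo (-(π / 2)) (π / 2),
      HasDerivWithinAt (fun θ ↦ l + s * tan θ) (s / cos θ ^ 2) (Ioo (-(π / 2)) (π / 2)) θ :=
    fun θ hθ ↦ by
      simpa [div_eq_mul_one_div s] using
        (((hasDerivAt_tan (cos_pos_of_mem_Ioo hθ).ne').const_mul s).const_add l).hasDerivWithinAt
  have hinj : InjOn (fun θ ↦ l + s * tan θ) (Ioo (-(π / 2)) (π / 2)) := fun a ha b hb h ↦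
    injOn_tan ha hb (mul_left_cancel₀ hs (add_left_cancel h))
  have himage : (fun θ ↦ l + s * tan θ) '' Ioo (-(π / 2)) (π / 2) = univ := by
    rw [show (fun θ ↦ l + s * tan θ) = (fun y ↦ l + s * y) ∘ tan from rfl, image_comp,
      image_tan_Ioo, image_univ, range_eq_univ]
    exact fun y ↦ ⟨(y - l) / s, by field_simp; ring⟩
  rw [← setIntegral_univ, ← himage,
    integral_image_eq_integral_abs_deriv_smul measurableSet_Ioo hderiv hinj]
  refine setIntegral_congr_fun measurableSet_Ioo fun θ _ ↦ ?_
  rw [abs_div, abs_sq]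

theorem cauchyPdf_affine_tan (l : ℝ) {s θ : ℝ} (hs : s ≠ 0) (hθ : cos θ ≠ 0) :
    cauchyPdf l s (l + s * tan θ) = cos θ ^ 2 / (π * s) := by
  have : s ^ 2 + (l + s * tan θ - l) ^ 2 = s ^ 2 / cos θ ^ 2 := by
    rw [tan_eq_sin_div_cos]
    field_simp
    linear_combination s ^ 2 * sin_sq_add_cos_sq θ
  rw [cauchyPdf, this]
  field_simp

theorem cauchyPdf_mul_log_affine_tan (l : ℝ) {s θ : ℝ} (hs : 0 < s) (hθ : cos θ ≠ 0) :
    s / cos θ ^ 2 * (cauchyPdf l s (l + s * tan θ) * log (cauchyPdf l s (l + s * tan θ)))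
      = (2 * log (cos θ) - log (π * s)) / π := by
  rw [cauchyPdf_affine_tan l hs.ne' hθ, log_div (by positivity) (by positivity), log_pow]
  field_simp
  push_cast
  ring

/-- The differential entropy of the Cauchy density `p_{l,s}` equals `log (4πs)`. -/
theorem cauchy_entropy (l s : ℝ) (hs : 0 < s) :
    -∫ x : ℝ, cauchyPdf l s x * Real.log (cauchyPdf l s x) = Real.log (4 * π * s) := by
  have hintegrand : EqOn
      (fun θ ↦ (|s| / cos θ ^ 2) • (cauchyPdf l s (l + s * tan θ)
        * log (cauchyPdf l s (l + s * tan θ))))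
      (fun θ ↦ (2 * log (cos θ) - log (π * s)) / π) (Ioo (-(π / 2)) (π / 2)) := fun θ hθ ↦ by
    dsimp only
    rw [abs_of_pos hs, smul_eq_mul]
    exact cauchyPdf_mul_log_affine_tan l hs (cos_pos_of_mem_Ioo hθ).ne'
  have hlog_cos : IntervalIntegrable (fun θ ↦ 2 * log (cos θ)) volume (-(π / 2)) (π / 2) :=
    intervalIntegrable_log_cos.const_mul 2
  rw [integral_eq_setIntegral_Ioo_affine_tan l hs.ne',
    setIntegral_congr_fun measurableSet_Ioo hintegrand, ← integral_Ioc_eq_integral_Ioo,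
    ← intervalIntegral.integral_of_le (by linarith [pi_pos]), intervalIntegral.integral_div,
    intervalIntegral.integral_sub hlog_cos intervalIntegrable_const,
    intervalIntegral.integral_const_mul, integral_log_cos_neg_pi_div_two_pi_div_two,
    intervalIntegral.integral_const, smul_eq_mul, show (4 : ℝ) * π * s = 2 ^ 2 * (π * s) by ring,
    log_mul (pow_ne_zero 2 two_ne_zero) (mul_pos pi_pos hs).ne', log_pow]
  field_simp
  push_cast
  ring
end

section
/- Let l0,l1 ∈ ℝ, s0,s1 > 0, θ ∈ (0,1), and m_θ(x) = (1−θ)·p_{l0,s0}(x) + θ·p_{l1,s1}(x). Then the Kullback–Leibler divergence from p_{l0,s0} to m_θ satisfies ∫_ℝ p_{l0,s0}(x)·log(p_{l0,s0}(x)/m_θ(x)) dx = log( ((l0−l1)² + (s0+s1)²) / ( (1−θ)·(s0² + s1² + (l0−l1)²) + 2·θ·s0·s1 + 2·√( s0²·s1² + s0·s1·((s0−s1)² + (l0−l1)²)·θ·(1−θ) ) ) ). -/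
open MeasureTheory Real

/-!
If `X` has density `p_{l,s}` and `b > 0`, then `E log ((X - a)² + b²) = log ((l - a)² + (s + b)²)`.
Both sides are `log b² + o(1)` as `b → ∞`, and they have the same derivative in `b`:
differentiating under the integral gives `2π ∫ p_{l,s} p_{a,b}`, and the product of two Cauchy
densities integrates to the Cauchy density with the added scale, a partial-fraction computation.

Completing the square, `θ s₁ ((x - l₀)² + s₀²) + (1 - θ) s₀ ((x - l₁)² + s₁²) = A ((x - a)² + b²)`
with `A = θ s₁ + (1 - θ) s₀`, so `p_{l₀,s₀} / m_θ = s₀ ((x - l₁)² + s₁²) / (A ((x - a)² + b²))`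
and the divergence is a difference of two such expected logarithms.
-/

open Filter Set Topology

lemma cauchyPdf_pos (l : ℝ) {s : ℝ} (hs : 0 < s) (x : ℝ) : 0 < cauchyPdf l s x := by
  unfold cauchyPdf; positivity

lemma continuous_cauchyPdf (l : ℝ) {s : ℝ} (hs : s ≠ 0) : Continuous (cauchyPdf l s) :=
  continuous_const.div (by fun_prop) fun x => by positivity

lemma cauchyPdf_eq_cauchyPDFReal (l : ℝ) {s : ℝ} (hs : 0 ≤ s) :
    cauchyPdf l s = ProbabilityTheory.cauchyPDFReal l s.toNNReal := by
  ext x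
  rw [ProbabilityTheory.cauchyPDFReal_def, cauchyPdf, Real.coe_toNNReal s hs]
  field_simp
  ring

lemma integrable_cauchyPdf (l : ℝ) {s : ℝ} (hs : 0 ≤ s) : Integrable (cauchyPdf l s) := by
  rw [cauchyPdf_eq_cauchyPDFReal l hs]
  exact ProbabilityTheory.integrable_cauchyPDFReal l

lemma integral_cauchyPdf (l : ℝ) {s : ℝ} (hs : 0 < s) : ∫ x, cauchyPdf l s x = 1 := by
  rw [cauchyPdf_eq_cauchyPDFReal l hs.le]
  exact ProbabilityTheory.integral_cauchyPDFReal_eq_one l (by simpa using hs)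

lemma cauchyPdf_mul_add (l b c : ℝ) {s : ℝ} (hs : s ≠ 0) (t : ℝ) :
    cauchyPdf l b (s * t + c) = s⁻¹ * cauchyPdf ((l - c) / s) (b / s) t := by
  unfold cauchyPdf
  field_simp
  ring

lemma integrable_inv_one_add_sq_mul_log :
    Integrable fun x : ℝ => (1 + x ^ 2)⁻¹ * log (1 + x ^ 2) := by
  have hdom : Integrable fun x : ℝ => 4 * (1 + ‖x‖ ^ 2) ^ (-(3 / 2 : ℝ) / 2) :=
    (integrable_rpow_neg_one_add_norm_sq (by norm_num)).const_mul 4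
  refine hdom.mono' (by fun_prop) (ae_of_all _ fun x => ?_)
  have hx : 0 < 1 + x ^ 2 := by positivity
  have hlog : log (1 + x ^ 2) ≤ (1 + x ^ 2) ^ (1 / 4 : ℝ) / (1 / 4) :=
    log_le_rpow_div hx.le (by norm_num)
  rw [norm_mul, norm_inv, norm_of_nonneg hx.le, norm_of_nonneg (log_nonneg (by nlinarith)),
    Real.norm_eq_abs, sq_abs]
  calc (1 + x ^ 2)⁻¹ * log (1 + x ^ 2)
      ≤ (1 + x ^ 2) ^ (-1 : ℝ) * ((1 + x ^ 2) ^ (1 / 4 : ℝ) / (1 / 4)) := by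
        rw [rpow_neg_one]; gcongr
    _ = 4 * (1 + x ^ 2) ^ (-(3 / 2 : ℝ) / 2) := by
        rw [mul_div_assoc', div_div_eq_mul_div, div_one, mul_comm, ← rpow_add hx]
        norm_num

lemma exists_mul_one_add_sq_le_sq_add_sq (u : ℝ) {v : ℝ} (hv : v ≠ 0) :
    ∃ c > 0, ∃ C, ∀ x : ℝ,
      c * (1 + x ^ 2) ≤ (x - u) ^ 2 + v ^ 2 ∧ (x - u) ^ 2 + v ^ 2 ≤ C * (1 + x ^ 2) := by
  have hv2 : 0 < v ^ 2 := by positivity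
  refine ⟨v ^ 2 / (2 * (1 + u ^ 2 + v ^ 2)), by positivity, 2 + 2 * u ^ 2 + v ^ 2,
    fun x => ⟨?_, ?_⟩⟩
  · rw [div_mul_eq_mul_div, div_le_iff₀ (by positivity)]
    nlinarith [mul_nonneg hv2.le (sq_nonneg (x - 2 * u)),
      mul_nonneg (sq_nonneg (x - u)) (add_nonneg (sq_nonneg u) (sq_nonneg v))]
  · nlinarith [sq_nonneg (x + u), sq_nonneg (u * x)]

lemma exists_cauchyPdf_le (l : ℝ) {s : ℝ} (hs : 0 < s) :
    ∃ C, ∀ x, cauchyPdf l s x ≤ C * (1 + x ^ 2)⁻¹ := by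
  obtain ⟨c, hc, _, hq⟩ := exists_mul_one_add_sq_le_sq_add_sq l hs.ne'
  refine ⟨s / (π * c), fun x => ?_⟩
  rw [cauchyPdf, ← div_eq_mul_inv, div_div, mul_assoc, add_comm]
  exact div_le_div_of_nonneg_left hs.le (by positivity)
    (mul_le_mul_of_nonneg_left (hq x).1 pi_pos.le)

lemma exists_abs_log_sq_add_sq_le (u : ℝ) {v : ℝ} (hv : v ≠ 0) :
    ∃ D, ∀ x : ℝ, |log ((x - u) ^ 2 + v ^ 2)| ≤ D + log (1 + x ^ 2) := by
  obtain ⟨c, hc, C, hq⟩ := exists_mul_one_add_sq_le_sq_add_sq u hv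
  refine ⟨|log c| + |log C|, fun x => abs_le.2 ⟨?_, ?_⟩⟩
  · have h1 : 0 < 1 + x ^ 2 := by positivity
    have := log_le_log (by positivity) (hq x).1
    rw [log_mul hc.ne' h1.ne'] at this
    have := log_nonneg (by nlinarith : (1 : ℝ) ≤ 1 + x ^ 2)
    linarith [neg_abs_le (log c), abs_nonneg (log C)]
  · have h1 : 0 < 1 + x ^ 2 := by positivity
    have hC : 0 < C :=
      pos_of_mul_pos_left ((by positivity : 0 < (x - u) ^ 2 + v ^ 2).trans_le (hq x).2) h1.le
    have := log_le_log (by positivity) (hq x).2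
    rw [log_mul hC.ne' h1.ne'] at this
    linarith [le_abs_self (log C), abs_nonneg (log c)]

lemma integrable_cauchyPdf_mul_log (l u : ℝ) {s v : ℝ} (hs : 0 < s) (hv : v ≠ 0) :
    Integrable fun x => cauchyPdf l s x * log ((x - u) ^ 2 + v ^ 2) := by
  obtain ⟨C, hC⟩ := exists_cauchyPdf_le l hs
  obtain ⟨D, hD⟩ := exists_abs_log_sq_add_sq_le u hv
  have hdom : Integrable fun x : ℝ =>
      C * D * (1 + x ^ 2)⁻¹ + C * ((1 + x ^ 2)⁻¹ * log (1 + x ^ 2)) :=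
    (integrable_inv_one_add_sq.const_mul _).add (integrable_inv_one_add_sq_mul_log.const_mul _)
  have hmeas : Continuous fun x => cauchyPdf l s x * log ((x - u) ^ 2 + v ^ 2) :=
    (continuous_cauchyPdf l hs.ne').mul (by fun_prop (disch := intro x; positivity))
  refine hdom.mono' hmeas.aestronglyMeasurable (ae_of_all _ fun x => ?_)
  rw [norm_mul, norm_of_nonneg (cauchyPdf_pos l hs x).le, Real.norm_eq_abs]
  calc cauchyPdf l s x * |log ((x - u) ^ 2 + v ^ 2)|
      ≤ C * (1 + x ^ 2)⁻¹ * (D + log (1 + x ^ 2)) :=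
        mul_le_mul (hC x) (hD x) (abs_nonneg _) ((cauchyPdf_pos l hs x).le.trans (hC x))
    _ = _ := by ring

lemma tendsto_cobounded_of_eq_comp_inv {f g : ℝ → ℝ} {y : ℝ} (hg : Tendsto g (𝓝 0) (𝓝 y))
    (hfg : ∀ x ≠ 0, f x = g x⁻¹) : Tendsto f (Bornology.cobounded ℝ) (𝓝 y) := by
  have hne : ∀ᶠ x in Bornology.cobounded ℝ, x ≠ 0 :=
    (tendsto_inv₀_cobounded'.eventually self_mem_nhdsWithin).mono fun x hx => by simpa using hx
  exact (hg.comp tendsto_inv₀_cobounded).congr' (hne.mono fun x hx => (hfg x hx).symm)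

lemma tendsto_div_one_add_sq_cobounded :
    Tendsto (fun t : ℝ => t / (1 + t ^ 2)) (Bornology.cobounded ℝ) (𝓝 0) := by
  have hg : Tendsto (fun s : ℝ => s / (s ^ 2 + 1)) (𝓝 0) (𝓝 0) := by
    have : ContinuousAt (fun s : ℝ => s / (s ^ 2 + 1)) 0 := by fun_prop (disch := norm_num)
    simpa using this.tendsto
  exact tendsto_cobounded_of_eq_comp_inv hg fun t ht => by field_simp

lemma tendsto_log_one_add_sq_sub_log_sq_add_sq_cobounded (u : ℝ) {v : ℝ} (hv : v ≠ 0) :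
    Tendsto (fun t : ℝ => log (1 + t ^ 2) - log ((t - u) ^ 2 + v ^ 2))
      (Bornology.cobounded ℝ) (𝓝 0) := by
  have hg : Tendsto (fun s : ℝ => log (s ^ 2 + 1) - log ((1 - u * s) ^ 2 + v ^ 2 * s ^ 2))
      (𝓝 0) (𝓝 0) := by
    have : ContinuousAt (fun s : ℝ => log (s ^ 2 + 1) - log ((1 - u * s) ^ 2 + v ^ 2 * s ^ 2))
      0 := by fun_prop (disch := norm_num)
    simpa using this.tendsto
  refine tendsto_cobounded_of_eq_comp_inv hg fun t ht => ?_
  have h1 : (t⁻¹) ^ 2 + 1 = t⁻¹ ^ 2 * (1 + t ^ 2) := by field_simp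
  have h2 : (1 - u * t⁻¹) ^ 2 + v ^ 2 * t⁻¹ ^ 2 = t⁻¹ ^ 2 * ((t - u) ^ 2 + v ^ 2) := by
    field_simp
  have ht2 : t⁻¹ ^ 2 ≠ 0 := by positivity
  rw [h1, h2, log_mul ht2 (by positivity), log_mul ht2 (by positivity)]
  ring

lemma integral_inv_one_add_sq_sq : ∫ x : ℝ, ((1 + x ^ 2) ^ 2)⁻¹ = π / 2 := by
  have hderiv : ∀ x : ℝ, HasDerivAt (fun t => (t / (1 + t ^ 2) + arctan t) / 2)
      ((1 + x ^ 2) ^ 2)⁻¹ x := by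
    intro x
    have h1 : 1 + x ^ 2 ≠ 0 := by positivity
    refine ((((hasDerivAt_id' x).div ((hasDerivAt_pow 2 x).const_add 1) h1).add
      (hasDerivAt_arctan x)).div_const 2).congr_deriv ?_
    field_simp
    ring
  have hint : Integrable fun x : ℝ => ((1 + x ^ 2) ^ 2)⁻¹ := by
    refine integrable_inv_one_add_sq.mono' (by fun_prop (disch := positivity))
      (ae_of_all _ fun x => ?_)
    have h1 : 1 ≤ 1 + x ^ 2 := by nlinarith
    rw [norm_inv, norm_pow, norm_of_nonneg (by positivity)]
    exact inv_anti₀ (by positivity) (le_self_pow₀ h1 two_ne_zero)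
  have hlim := tendsto_div_one_add_sq_cobounded
  rw [integral_of_hasDerivAt_of_tendsto hderiv hint
    (((hlim.mono_left IsOrderBornology.atBot_le_cobounded).add
      (tendsto_nhds_of_tendsto_nhdsWithin tendsto_arctan_atBot)).div_const 2)
    (((hlim.mono_left IsOrderBornology.atTop_le_cobounded).add
      (tendsto_nhds_of_tendsto_nhdsWithin tendsto_arctan_atTop)).div_const 2)]
  ring

lemma integrable_inv_one_add_sq_mul_sq_add_sq (u : ℝ) {v : ℝ} (hv : v ≠ 0) :
    Integrable fun x : ℝ => ((1 + x ^ 2) * ((x - u) ^ 2 + v ^ 2))⁻¹ := by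
  refine (integrable_inv_one_add_sq.const_mul (v ^ 2)⁻¹).mono'
    (by fun_prop (disch := intro x; positivity)) (ae_of_all _ fun x => ?_)
  rw [norm_inv, norm_of_nonneg (by positivity), mul_inv, mul_comm]
  exact mul_le_mul_of_nonneg_right (inv_anti₀ (by positivity) (by nlinarith)) (by positivity)

/-- Partial fractions, multiplied through by the common factor
`(u² + (1 + v)²) (u² + (v - 1)²)`, which vanishes exactly when `u = 0, v = 1`. -/
lemma hasDerivAt_partialFractions (u : ℝ) {v : ℝ} (hv : v ≠ 0) (x : ℝ) :
    HasDerivAt (fun t => u * (log (1 + t ^ 2) - log ((t - u) ^ 2 + v ^ 2)) +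
        (u ^ 2 + v ^ 2 - 1) * arctan t + (1 + u ^ 2 - v ^ 2) / v * arctan ((t - u) / v))
      ((u ^ 2 + (1 + v) ^ 2) * (u ^ 2 + (v - 1) ^ 2) * ((1 + x ^ 2) * ((x - u) ^ 2 + v ^ 2))⁻¹)
      x := by
  have h1 : 1 + x ^ 2 ≠ 0 := by positivity
  have hq : (x - u) ^ 2 + v ^ 2 ≠ 0 := by positivity
  have hlog1 := ((hasDerivAt_pow 2 x).const_add 1).log h1
  have hlog2 := ((((hasDerivAt_id' x).sub_const u).fun_pow 2).add_const (v ^ 2)).log hq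
  have hatan := (((hasDerivAt_id' x).sub_const u).div_const v).arctan
  refine ((((hlog1.sub hlog2).const_mul u).add ((hasDerivAt_arctan x).const_mul _)).add
    (hatan.const_mul _)).congr_deriv ?_
  field_simp
  ring

lemma integral_inv_one_add_sq_mul_sq_add_sq (u : ℝ) {v : ℝ} (hv : 0 < v) :
    ∫ x : ℝ, ((1 + x ^ 2) * ((x - u) ^ 2 + v ^ 2))⁻¹ =
      π * (1 + v) / (v * (u ^ 2 + (1 + v) ^ 2)) := by
  by_cases hdeg : u = 0 ∧ v = 1
  · obtain ⟨rfl, rfl⟩ := hdeg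
    simp_rw [sub_zero, one_pow, add_comm (_ ^ 2) (1 : ℝ), ← sq, integral_inv_one_add_sq_sq]
    ring
  have hK : (u ^ 2 + (1 + v) ^ 2) * (u ^ 2 + (v - 1) ^ 2) ≠ 0 := by
    have : u ≠ 0 ∨ v - 1 ≠ 0 := by rw [sub_ne_zero]; tauto
    rcases this with h | h <;> positivity
  have hlog := tendsto_log_one_add_sq_sub_log_sq_add_sq_cobounded u hv.ne'
  have hatan_top := tendsto_nhds_of_tendsto_nhdsWithin tendsto_arctan_atTop
  have hatan_bot := tendsto_nhds_of_tendsto_nhdsWithin tendsto_arctan_atBot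
  have hshift_top : Tendsto (fun t : ℝ => (t - u) / v) atTop atTop :=
    (tendsto_atTop_add_const_right _ (-u) tendsto_id).atTop_div_const hv
  have hshift_bot : Tendsto (fun t : ℝ => (t - u) / v) atBot atBot :=
    (tendsto_atBot_add_const_right _ (-u) tendsto_id).atBot_div_const hv
  have key := integral_of_hasDerivAt_of_tendsto (hasDerivAt_partialFractions u hv.ne')
    ((integrable_inv_one_add_sq_mul_sq_add_sq u hv.ne').const_mul _)
    ((((hlog.mono_left IsOrderBornology.atBot_le_cobounded).const_mul u).add
      (hatan_bot.const_mul _)).add ((hatan_bot.comp hshift_bot).const_mul _))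
    ((((hlog.mono_left IsOrderBornology.atTop_le_cobounded).const_mul u).add
      (hatan_top.const_mul _)).add ((hatan_top.comp hshift_top).const_mul _))
  rw [integral_const_mul] at key
  generalize (∫ x : ℝ, ((1 + x ^ 2) * ((x - u) ^ 2 + v ^ 2))⁻¹) = I at key ⊢
  rw [eq_div_iff (by positivity)]
  apply mul_left_cancel₀ hK
  field_simp at key
  linear_combination (u ^ 2 + (1 + v) ^ 2) * key / 2

lemma integral_cauchyPdf_zero_one_mul_cauchyPdf (u : ℝ) {v : ℝ} (hv : 0 < v) :
    ∫ x, cauchyPdf 0 1 x * cauchyPdf u v x = cauchyPdf 0 (1 + v) u := by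
  have h : ∀ x, cauchyPdf 0 1 x * cauchyPdf u v x =
      v / π ^ 2 * ((1 + x ^ 2) * ((x - u) ^ 2 + v ^ 2))⁻¹ := fun x => by
    unfold cauchyPdf; field_simp; ring
  simp_rw [h, integral_const_mul, integral_inv_one_add_sq_mul_sq_add_sq u hv, cauchyPdf]
  field_simp
  ring

lemma integral_eq_mul_integral_comp_mul_add (f : ℝ → ℝ) {s : ℝ} (hs : 0 < s) (c : ℝ) :
    ∫ x, f x = s * ∫ t, f (s * t + c) := by
  rw [Measure.integral_comp_mul_left (fun y => f (y + c)), integral_add_right_eq_self,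
    abs_of_pos (inv_pos.2 hs), smul_eq_mul, mul_inv_cancel_left₀ hs.ne']

lemma integral_cauchyPdf_mul_cauchyPdf (l a : ℝ) {s b : ℝ} (hs : 0 < s) (hb : 0 < b) :
    ∫ x, cauchyPdf l s x * cauchyPdf a b x = cauchyPdf l (s + b) a := by
  rw [integral_eq_mul_integral_comp_mul_add _ hs l]
  simp_rw [cauchyPdf_mul_add _ _ _ hs.ne', sub_self, zero_div, div_self hs.ne',
    mul_mul_mul_comm, integral_const_mul,
    integral_cauchyPdf_zero_one_mul_cauchyPdf _ (div_pos hb hs), cauchyPdf]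
  field_simp
  ring

lemma eqOn_Ioi_of_hasDerivAt_of_tendsto_sub {f g f' : ℝ → ℝ} {c : ℝ}
    (hf : ∀ x > c, HasDerivAt f (f' x) x) (hg : ∀ x > c, HasDerivAt g (f' x) x)
    (hfg : Tendsto (fun x => f x - g x) atTop (𝓝 0)) : EqOn f g (Ioi c) := by
  obtain ⟨k, hk⟩ := isOpen_Ioi.exists_eq_add_of_deriv_eq isPreconnected_Ioi
    (fun x hx => (hf x hx).differentiableAt.differentiableWithinAt)
    (fun x hx => (hg x hx).differentiableAt.differentiableWithinAt)
    (fun x hx => (hf x hx).deriv.trans (hg x hx).deriv.symm)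
  have hk0 : k = 0 := by
    refine tendsto_nhds_unique (tendsto_const_nhds.congr' ?_) hfg
    filter_upwards [eventually_gt_atTop c] with x hx
    rw [hk hx]
    ring
  intro x hx
  simpa [hk0] using hk hx

lemma hasDerivAt_log_sq_add_sq (x a : ℝ) {w : ℝ} (hw : w ≠ 0) :
    HasDerivAt (fun w => log ((x - a) ^ 2 + w ^ 2)) (2 * π * cauchyPdf a w x) w := by
  refine (((hasDerivAt_pow 2 w).const_add ((x - a) ^ 2)).log (by positivity)).congr_deriv ?_
  unfold cauchyPdf
  field_simp
  ring

lemma hasDerivAt_integral_cauchyPdf_mul_log (l a : ℝ) {s b : ℝ} (hs : 0 < s) (hb : 0 < b) :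
    HasDerivAt (fun w => ∫ x, cauchyPdf l s x * log ((x - a) ^ 2 + w ^ 2))
      (2 * π * cauchyPdf l (s + b) a) b := by
  have hball : ∀ w ∈ Metric.ball b (b / 2), b / 2 < w := fun w hw => by
    rw [Metric.mem_ball, Real.dist_eq, abs_lt] at hw; linarith
  have hball0 : ∀ w ∈ Metric.ball b (b / 2), w ≠ 0 := fun w hw =>
    ((half_pos hb).trans (hball w hw)).ne'
  have key := hasDerivAt_integral_of_dominated_loc_of_deriv_le (μ := volume)
    (F' := fun w x => cauchyPdf l s x * (2 * π * cauchyPdf a w x))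
    (bound := fun x => cauchyPdf l s x * (4 / b)) (Metric.ball_mem_nhds b (half_pos hb))
    ((eventually_ne_nhds hb.ne').mono fun w hw =>
      ((continuous_cauchyPdf l hs.ne').mul
        (by fun_prop (disch := intro x; positivity))).aestronglyMeasurable)
    (integrable_cauchyPdf_mul_log l a hs hb.ne')
    ((continuous_cauchyPdf l hs.ne').mul
      ((continuous_cauchyPdf a hb.ne').const_mul _)).aestronglyMeasurable
    (ae_of_all _ fun x w hw => ?_) ((integrable_cauchyPdf l hs.le).mul_const _)
    (ae_of_all _ fun x w hw => ((hasDerivAt_log_sq_add_sq x a (hball0 w hw)).const_mul _))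
  · simp_rw [mul_left_comm (cauchyPdf l s _), integral_const_mul,
      integral_cauchyPdf_mul_cauchyPdf l a hs hb] at key
    exact key.2
  · -- on the ball, `2 w / ((x - a)² + w²) ≤ 2 / w < 4 / b`
    have hw := hball w hw
    have hw0 : 0 < w := by linarith
    rw [norm_mul, norm_of_nonneg (cauchyPdf_pos l hs x).le,
      norm_of_nonneg (by have := cauchyPdf_pos a hw0 x; positivity)]
    refine mul_le_mul_of_nonneg_left ?_ (cauchyPdf_pos l hs x).le
    unfold cauchyPdf
    rw [mul_div_assoc', mul_comm 2 π, mul_assoc, mul_div_mul_left _ _ pi_ne_zero,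
      div_le_div_iff₀ (by positivity) hb]
    nlinarith [sq_nonneg (x - a)]

lemma tendsto_integral_cauchyPdf_mul_log_sub_log_sq (l a : ℝ) {s : ℝ} (hs : 0 < s) :
    Tendsto (fun b => (∫ x, cauchyPdf l s x * log ((x - a) ^ 2 + b ^ 2)) - log (b ^ 2))
      atTop (𝓝 0) := by
  have hsplit : ∀ b : ℝ, b ≠ 0 → ∀ x,
      log (1 + ((x - a) * b⁻¹) ^ 2) = log ((x - a) ^ 2 + b ^ 2) - log (b ^ 2) := by
    intro b hb x
    rw [← log_div (by positivity) (by positivity)]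
    congr 1
    field_simp
    ring
  have hdct : Tendsto (fun b => ∫ x, cauchyPdf l s x * log (1 + ((x - a) * b⁻¹) ^ 2)) atTop
      (𝓝 (∫ x, cauchyPdf l s x * 0)) := by
    refine tendsto_integral_filter_of_dominated_convergence
      (fun x => cauchyPdf l s x * log ((x - a) ^ 2 + 1 ^ 2))
      (Eventually.of_forall fun b => ((continuous_cauchyPdf l hs.ne').mul
        (by fun_prop (disch := intro x; positivity))).aestronglyMeasurable)
      ?_ (integrable_cauchyPdf_mul_log l a hs one_ne_zero) (ae_of_all _ fun x => ?_)
    · filter_upwards [eventually_ge_atTop 1] with b hb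
      refine ae_of_all _ fun x => ?_
      have hb' : b⁻¹ ^ 2 ≤ 1 := pow_le_one₀ (by positivity) (inv_le_one_of_one_le₀ hb)
      rw [norm_mul, norm_of_nonneg (cauchyPdf_pos l hs x).le,
        norm_of_nonneg (log_nonneg (by nlinarith))]
      refine mul_le_mul_of_nonneg_left (log_le_log (by positivity) ?_) (cauchyPdf_pos l hs x).le
      rw [mul_pow, one_pow, add_comm]
      gcongr
      exact mul_le_of_le_one_right (sq_nonneg _) hb'
    · have : Tendsto (fun b : ℝ => 1 + ((x - a) * b⁻¹) ^ 2) atTop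
          (𝓝 (1 + ((x - a) * 0) ^ 2)) :=
        ((tendsto_inv_atTop_zero.const_mul (x - a)).pow 2).const_add 1
      simpa using
        ((continuousAt_log (by norm_num)).tendsto.comp this).const_mul (cauchyPdf l s x)
  simp only [mul_zero, integral_zero] at hdct
  refine hdct.congr' ?_
  filter_upwards [eventually_gt_atTop 0] with b hb
  simp_rw [hsplit b hb.ne', mul_sub]
  rw [integral_sub (integrable_cauchyPdf_mul_log l a hs hb.ne')
    ((integrable_cauchyPdf l hs.le).mul_const _), integral_mul_const, integral_cauchyPdf l hs,
    one_mul]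

lemma integral_cauchyPdf_mul_log_sq_add_sq (l a : ℝ) {s b : ℝ} (hs : 0 < s) (hb : 0 < b) :
    ∫ x, cauchyPdf l s x * log ((x - a) ^ 2 + b ^ 2) = log ((l - a) ^ 2 + (s + b) ^ 2) := by
  have hderiv : ∀ w > 0, HasDerivAt (fun w => log ((l - a) ^ 2 + (s + w) ^ 2))
      (2 * π * cauchyPdf l (s + w) a) w := by
    intro w hw
    have hsw : 0 < s + w := by positivity
    refine ((((hasDerivAt_id' w).const_add s).fun_pow 2).const_add _ |>.log
      (by positivity)).congr_deriv ?_
    unfold cauchyPdf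
    field_simp
    ring
  have hlim : Tendsto (fun w => log ((l - a) ^ 2 + (s + w) ^ 2) - log (w ^ 2)) atTop (𝓝 0) := by
    have h0 : ContinuousAt (fun t => log ((l - a) ^ 2 * t ^ 2 + (s * t + 1) ^ 2)) 0 := by
      fun_prop (disch := norm_num)
    have h1 : Tendsto (fun t => log ((l - a) ^ 2 * t ^ 2 + (s * t + 1) ^ 2)) (𝓝 0) (𝓝 0) := by
      simpa using h0.tendsto
    refine (h1.comp tendsto_inv_atTop_zero).congr' ?_
    filter_upwards [eventually_gt_atTop 0] with w hw
    rw [Function.comp_apply, ← log_div (by positivity) (by positivity)]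
    congr 1
    field_simp
  refine eqOn_Ioi_of_hasDerivAt_of_tendsto_sub
    (fun w hw => hasDerivAt_integral_cauchyPdf_mul_log l a hs hw) hderiv ?_ hb
  simpa using (tendsto_integral_cauchyPdf_mul_log_sub_log_sq l a hs).sub hlim

lemma integral_cauchyPdf_mul_log_mul_div_mul (l a₁ a₂ : ℝ) {s b₁ b₂ c d : ℝ} (hs : 0 < s)
    (hb₁ : 0 < b₁) (hb₂ : 0 < b₂) (hc : 0 < c) (hd : 0 < d) :
    ∫ x, cauchyPdf l s x * log (c * ((x - a₁) ^ 2 + b₁ ^ 2) / (d * ((x - a₂) ^ 2 + b₂ ^ 2))) =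
      log (c * ((l - a₁) ^ 2 + (s + b₁) ^ 2) / (d * ((l - a₂) ^ 2 + (s + b₂) ^ 2))) := by
  have hpt : ∀ x, cauchyPdf l s x *
      log (c * ((x - a₁) ^ 2 + b₁ ^ 2) / (d * ((x - a₂) ^ 2 + b₂ ^ 2))) =
      cauchyPdf l s x * (log c - log d) + (cauchyPdf l s x * log ((x - a₁) ^ 2 + b₁ ^ 2) -
        cauchyPdf l s x * log ((x - a₂) ^ 2 + b₂ ^ 2)) := fun x => by
    rw [log_div (by positivity) (by positivity), log_mul hc.ne' (by positivity),
      log_mul hd.ne' (by positivity)]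
    ring
  have h₁ := integrable_cauchyPdf_mul_log l a₁ hs hb₁.ne'
  have h₂ := integrable_cauchyPdf_mul_log l a₂ hs hb₂.ne'
  rw [integral_congr_ae (ae_of_all _ hpt),
    integral_add ((integrable_cauchyPdf l hs.le).mul_const _) (h₁.sub' h₂), integral_sub h₁ h₂,
    integral_mul_const, integral_cauchyPdf l hs, one_mul,
    integral_cauchyPdf_mul_log_sq_add_sq l a₁ hs hb₁,
    integral_cauchyPdf_mul_log_sq_add_sq l a₂ hs hb₂, log_div (by positivity) (by positivity),
    log_mul hc.ne' (by positivity), log_mul hd.ne' (by positivity)]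
  ring

lemma mul_sq_add_sq_add_mul_sq_add_sq (α β p q c d x : ℝ) (h : α + β ≠ 0) :
    α * ((x - p) ^ 2 + c ^ 2) + β * ((x - q) ^ 2 + d ^ 2) =
      (α + β) * ((x - (α * p + β * q) / (α + β)) ^ 2 +
        ((α + β) * (α * c ^ 2 + β * d ^ 2) + α * β * (p - q) ^ 2) / (α + β) ^ 2) := by
  field_simp
  ring

lemma cauchyPdf_div_mixture (l0 l1 θ : ℝ) {s0 s1 : ℝ} (hs0 : 0 < s0) (hs1 : 0 < s1) (x : ℝ) :
    cauchyPdf l0 s0 x / ((1 - θ) * cauchyPdf l0 s0 x + θ * cauchyPdf l1 s1 x) =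
      s0 * ((x - l1) ^ 2 + s1 ^ 2) /
        (θ * s1 * ((x - l0) ^ 2 + s0 ^ 2) + (1 - θ) * s0 * ((x - l1) ^ 2 + s1 ^ 2)) := by
  have hmix : (1 - θ) * cauchyPdf l0 s0 x + θ * cauchyPdf l1 s1 x =
      (θ * s1 * ((x - l0) ^ 2 + s0 ^ 2) + (1 - θ) * s0 * ((x - l1) ^ 2 + s1 ^ 2)) /
        (π * (s0 ^ 2 + (x - l0) ^ 2) * (s1 ^ 2 + (x - l1) ^ 2)) := by
    unfold cauchyPdf
    field_simp
    ring
  rw [hmix, cauchyPdf, div_div_eq_mul_div]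
  congr 1
  field_simp
  ring

/-- Closed form of the Kullback–Leibler divergence from a Cauchy density to a
mixture of two Cauchy densities. -/
theorem kl_cauchy_to_mixture (l0 l1 s0 s1 θ : ℝ) (hs0 : 0 < s0) (hs1 : 0 < s1)
    (hθ : θ ∈ Set.Ioo (0 : ℝ) 1) :
    ∫ x : ℝ, cauchyPdf l0 s0 x *
        Real.log (cauchyPdf l0 s0 x /
          ((1 - θ) * cauchyPdf l0 s0 x + θ * cauchyPdf l1 s1 x)) =
      Real.log (((l0 - l1) ^ 2 + (s0 + s1) ^ 2) /
        ((1 - θ) * (s0 ^ 2 + s1 ^ 2 + (l0 - l1) ^ 2) + 2 * θ * s0 * s1 +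
          2 * Real.sqrt (s0 ^ 2 * s1 ^ 2 +
            s0 * s1 * ((s0 - s1) ^ 2 + (l0 - l1) ^ 2) * θ * (1 - θ)))) := by
  obtain ⟨hθ0, hθ1⟩ := hθ
  have hθ1' : 0 < 1 - θ := sub_pos.2 hθ1
  set S := s0 ^ 2 * s1 ^ 2 + s0 * s1 * ((s0 - s1) ^ 2 + (l0 - l1) ^ 2) * θ * (1 - θ)
  set A := θ * s1 + (1 - θ) * s0 with hA_def
  set a := (θ * s1 * l0 + (1 - θ) * s0 * l1) / A
  set b := √S / A with hb_def
  have hA : 0 < A := by positivity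
  have hb : 0 < b := by positivity
  have hquad : ∀ x, θ * s1 * ((x - l0) ^ 2 + s0 ^ 2) + (1 - θ) * s0 * ((x - l1) ^ 2 + s1 ^ 2) =
      A * ((x - a) ^ 2 + b ^ 2) := fun x => by
    rw [mul_sq_add_sq_add_mul_sq_add_sq _ _ _ _ _ _ _ hA.ne', hb_def, div_pow,
      sq_sqrt (by positivity)]
    congr 3
    ring
  simp_rw [cauchyPdf_div_mixture l0 l1 θ hs0 hs1, hquad]
  rw [integral_cauchyPdf_mul_log_mul_div_mul l0 l1 a hs0 hs1 hb hs0 hA,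
    ← mul_div_cancel₀ √S hA.ne', ← hb_def]
  congr 1
  rw [div_eq_div_iff (by positivity) (by positivity)]
  linear_combination ((l0 - l1) ^ 2 + (s0 + s1) ^ 2) * (hquad l0 - s0 ^ 2 * hA_def)
end

section
/- Let μ be a σ-finite measure, let p0 and p1 be probability densities with respect to μ, and for θ ∈ (0,1) set m_θ = (1−θ)·p0 + θ·p1. Let θ1, θ2 ∈ (0,1) and assume that m_{θ1}·log(m_{θ1}/m_{θ2}), m_{θ2}·log(m_{θ2}/m_{θ1}), p0·(log m_{θ2} − log m_{θ1}) and p1·(log m_{θ2} − log m_{θ1}) are μ-integrable. Then the Jeffreys divergence satisfies ∫ m_{θ1}·log(m_{θ1}/m_{θ2}) dμ + ∫ m_{θ2}·log(m_{θ2}/m_{θ1}) dμ = (θ2 − θ1)·∫ (p1 − p0)·(log m_{θ2} − log m_{θ1}) dμ. -/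
open MeasureTheory Real

/-!
Pointwise, `a log (a/b) + b log (b/a) = (a - b)(log a - log b)` as soon as `a` and `b` vanish
together, and two mixtures with weights in `(0,1)` vanish exactly where `p0` and `p1` both do.
Since `m θ2 - m θ1 = (θ2 - θ1)(p1 - p0)`, integrating gives the identity.
-/

lemma mul_log_div_add_mul_log_div {a b : ℝ} (hab : a = 0 ↔ b = 0) :
    a * log (a / b) + b * log (b / a) = (a - b) * (log a - log b) := by
  by_cases ha : a = 0
  · simp [ha, hab.mp ha]
  · have hb : b ≠ 0 := fun hb => ha (hab.mpr hb)
    rw [log_div ha hb, log_div hb ha]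
    ring

lemma mixture_eq_zero_iff {θ p q : ℝ} (hθ : θ ∈ Set.Ioo (0 : ℝ) 1) (hp : 0 ≤ p) (hq : 0 ≤ q) :
    (1 - θ) * p + θ * q = 0 ↔ p = 0 ∧ q = 0 := by
  obtain ⟨hθ0, hθ1⟩ := hθ
  constructor
  · intro h
    obtain ⟨hp0, hq0⟩ := (add_eq_zero_iff_of_nonneg (by nlinarith) (by positivity)).mp h
    exact ⟨(mul_eq_zero.mp hp0).resolve_left (by linarith),
      (mul_eq_zero.mp hq0).resolve_left hθ0.ne'⟩
  · rintro ⟨rfl, rfl⟩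
    ring

theorem integral_mul_log_div_add_integral_mul_log_div {X : Type*} [MeasurableSpace X]
    {μ : Measure X} {f g : X → ℝ} (hfg : ∀ x, f x = 0 ↔ g x = 0)
    (hf : Integrable (fun x => f x * log (f x / g x)) μ)
    (hg : Integrable (fun x => g x * log (g x / f x)) μ) :
    (∫ x, f x * log (f x / g x) ∂μ) + (∫ x, g x * log (g x / f x) ∂μ) =
      ∫ x, (f x - g x) * (log (f x) - log (g x)) ∂μ := by
  rw [← integral_add hf hg]
  exact integral_congr_ae (Filter.Eventually.of_forall fun x =>
    mul_log_div_add_mul_log_div (hfg x))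

theorem jeffreys_mixture_family_general {X : Type*} [MeasurableSpace X] (μ : Measure X)
    (p0 p1 : X → ℝ)
    (hp0nn : ∀ x, 0 ≤ p0 x) (hp1nn : ∀ x, 0 ≤ p1 x)
    (m : ℝ → X → ℝ) (hm : m = fun θ x => (1 - θ) * p0 x + θ * p1 x)
    (θ1 θ2 : ℝ) (hθ1 : θ1 ∈ Set.Ioo (0 : ℝ) 1) (hθ2 : θ2 ∈ Set.Ioo (0 : ℝ) 1)
    (h12 : Integrable (fun x => m θ1 x * Real.log (m θ1 x / m θ2 x)) μ)
    (h21 : Integrable (fun x => m θ2 x * Real.log (m θ2 x / m θ1 x)) μ) :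
    (∫ x, m θ1 x * Real.log (m θ1 x / m θ2 x) ∂μ) +
        (∫ x, m θ2 x * Real.log (m θ2 x / m θ1 x) ∂μ) =
      (θ2 - θ1) *
        ∫ x, (p1 x - p0 x) * (Real.log (m θ2 x) - Real.log (m θ1 x)) ∂μ := by
  have hzero : ∀ x, m θ1 x = 0 ↔ m θ2 x = 0 := fun x => by
    subst hm
    rw [mixture_eq_zero_iff hθ1 (hp0nn x) (hp1nn x), mixture_eq_zero_iff hθ2 (hp0nn x) (hp1nn x)]
  have hdiff : ∀ x, (m θ1 x - m θ2 x) * (log (m θ1 x) - log (m θ2 x)) =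
      (θ2 - θ1) * ((p1 x - p0 x) * (log (m θ2 x) - log (m θ1 x))) := fun x => by
    subst hm
    ring
  rw [integral_mul_log_div_add_integral_mul_log_div hzero h12 h21, ← integral_const_mul]
  simp only [hdiff]

/-- The Jeffreys divergence between two mixtures of a two-component mixture family
equals `(θ2 − θ1)·(η(θ2) − η(θ1))`. -/
theorem jeffreys_mixture_family {X : Type*} [MeasurableSpace X] (μ : Measure X)
    [SigmaFinite μ] (p0 p1 : X → ℝ) (hp0 : Measurable p0) (hp1 : Measurable p1)
    (hp0nn : ∀ x, 0 ≤ p0 x) (hp1nn : ∀ x, 0 ≤ p1 x)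
    (hp0int : ∫ x, p0 x ∂μ = 1) (hp1int : ∫ x, p1 x ∂μ = 1)
    (m : ℝ → X → ℝ) (hm : m = fun θ x => (1 - θ) * p0 x + θ * p1 x)
    (θ1 θ2 : ℝ) (hθ1 : θ1 ∈ Set.Ioo (0 : ℝ) 1) (hθ2 : θ2 ∈ Set.Ioo (0 : ℝ) 1)
    (h12 : Integrable (fun x => m θ1 x * Real.log (m θ1 x / m θ2 x)) μ)
    (h21 : Integrable (fun x => m θ2 x * Real.log (m θ2 x / m θ1 x)) μ)
    (h0 : Integrable (fun x => p0 x * (Real.log (m θ2 x) - Real.log (m θ1 x))) μ)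
    (h1 : Integrable (fun x => p1 x * (Real.log (m θ2 x) - Real.log (m θ1 x))) μ) :
    (∫ x, m θ1 x * Real.log (m θ1 x / m θ2 x) ∂μ) +
        (∫ x, m θ2 x * Real.log (m θ2 x / m θ1 x) ∂μ) =
      (θ2 - θ1) *
        ∫ x, (p1 x - p0 x) * (Real.log (m θ2 x) - Real.log (m θ1 x)) ∂μ :=
  jeffreys_mixture_family_general μ p0 p1 hp0nn hp1nn m hm θ1 θ2 hθ1 hθ2 h12 h21
end
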